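/- An R-S bimodule M is invertible (i.e., there exists an S-R bimodule M' with M ⊗_S M' ≅ R as R-R bimodules and M' ⊗_R M ≅ S as S-S bimodules) if and only if M is a progenerator as a right S-module and the left action map R → End_S(M) is a ring isomorphism. -/

import Mathlib

/-!
STATEMENT 0: Existence of the tensor product of bimodules over noncommutative
rings, with its universal property.

A right `B`-action on `M` is encoded as a left action of `Bᵐᵒᵖ`.
-/

open MulOpposite

/-- `f : M → N → L` is `B`-balanced and `A`-`C` bilinear, where `M` is an
`A`-`B` bimodule, `N` is a `B`-`C` bimodule and `L` is an `A`-`C` bimodule. -/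
structure IsBalancedBilinear (A B C : Type) [Ring A] [Ring B] [Ring C]
    {M N L : Type} [AddCommGroup M] [Module A M] [Module Bᵐᵒᵖ M]
    [AddCommGroup N] [Module B N] [Module Cᵐᵒᵖ N]
    [AddCommGroup L] [Module A L] [Module Cᵐᵒᵖ L]
    (f : M → N → L) : Prop where
  add_left : ∀ m m' n, f (m + m') n = f m n + f m' n
  add_right : ∀ m n n', f m (n + n') = f m n + f m n'
  balanced : ∀ (b : B) m n, f (op b • m) n = f m (b • n)
  map_smul_left : ∀ (a : A) m n, f (a • m) n = a • f m n
  map_smul_right : ∀ (c : C) m n, f m (op c • n) = op c • f m n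

/-- `α` is a homomorphism of `A`-`C` bimodules. -/
def IsBimodHom (A C : Type) [Ring A] [Ring C] {P L : Type}
    [AddCommGroup P] [Module A P] [Module Cᵐᵒᵖ P]
    [AddCommGroup L] [Module A L] [Module Cᵐᵒᵖ L] (α : P → L) : Prop :=
  (∀ x y, α (x + y) = α x + α y) ∧
  (∀ (a : A) x, α (a • x) = a • α x) ∧
  (∀ (c : Cᵐᵒᵖ) x, α (c • x) = c • α x)

/-- A realization of the tensor product `M ⊗[B] N` of an `A`-`B` bimodule `M`
and a `B`-`C` bimodule `N`: an `A`-`C` bimodule `P` together with a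
`B`-balanced `A`-`C` bilinear map `τ` which is universal among such maps. -/
structure BimodTensorProduct (A B C : Type) [Ring A] [Ring B] [Ring C]
    (M N : Type) [AddCommGroup M] [Module A M] [Module Bᵐᵒᵖ M] [SMulCommClass A Bᵐᵒᵖ M]
    [AddCommGroup N] [Module B N] [Module Cᵐᵒᵖ N] [SMulCommClass B Cᵐᵒᵖ N] : Type 1 where
  P : Type
  [instAdd : AddCommGroup P]
  [instL : Module A P]
  [instR : Module Cᵐᵒᵖ P]
  [instComm : SMulCommClass A Cᵐᵒᵖ P]
  τ : M → N → P
  balanced_bilinear : IsBalancedBilinear A B C τ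
  universal : ∀ (L : Type) [AddCommGroup L] [Module A L] [Module Cᵐᵒᵖ L]
      [SMulCommClass A Cᵐᵒᵖ L] (φ : M → N → L), IsBalancedBilinear A B C φ →
      ∃! α : P → L, IsBimodHom A C α ∧ ∀ m n, φ m n = α (τ m n)

/-- `P` is a generator for the category of right `S`-modules:
the functor `Hom_S(P, -)` is faithful. -/
def IsGenerator (S P : Type) [Ring S] [AddCommGroup P] [Module Sᵐᵒᵖ P] : Prop :=
  ∀ (M N : Type) [AddCommGroup M] [Module Sᵐᵒᵖ M] [AddCommGroup N] [Module Sᵐᵒᵖ N]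
    (f g : M →ₗ[Sᵐᵒᵖ] N), (∀ h : P →ₗ[Sᵐᵒᵖ] M, f.comp h = g.comp h) → f = g

/-- The left action map `R → End_S(M)` of an `R`-`S` bimodule `M`, as a ring
homomorphism. -/
def leftActionHom (R S M : Type) [Ring R] [Ring S] [AddCommGroup M] [Module R M]
    [Module Sᵐᵒᵖ M] [SMulCommClass R Sᵐᵒᵖ M] : R →+* Module.End Sᵐᵒᵖ M where
  toFun r :=
    { toFun := fun x => r • x
      map_add' := fun x y => smul_add r x y
      map_smul' := fun s x => smul_comm r s x }
  map_one' := by ext x; exact one_smul R x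
  map_mul' r r' := by ext x; exact mul_smul r r' x
  map_zero' := by ext x; exact zero_smul R x
  map_add' r r' := by ext x; exact add_smul r r' x

/-- Data exhibiting the `R`-`S` bimodule `M` as invertible: an `S`-`R`
bimodule `M'` with `M ⊗[S] M' ≅ R` as `R`-`R` bimodules and `M' ⊗[R] M ≅ S`
as `S`-`S` bimodules. -/
structure InvertibleBimodule (R S M : Type) [Ring R] [Ring S] [AddCommGroup M]
    [Module R M] [Module Sᵐᵒᵖ M] [SMulCommClass R Sᵐᵒᵖ M] : Type 1 where
  M' : Type
  [addM' : AddCommGroup M']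
  [modLM' : Module S M']
  [modRM' : Module Rᵐᵒᵖ M']
  [commM' : SMulCommClass S Rᵐᵒᵖ M']
  T₁ : BimodTensorProduct R S R M M'
  T₂ : BimodTensorProduct S R S M' M
  e₁ : T₁.P → R
  e₁_iso : letI := T₁.instAdd; letI := T₁.instL; letI := T₁.instR; letI := T₁.instComm
    IsBimodHom R R e₁ ∧ Function.Bijective e₁
  e₂ : T₂.P → S
  e₂_iso : letI := T₂.instAdd; letI := T₂.instL; letI := T₂.instR; letI := T₂.instComm
    IsBimodHom S S e₂ ∧ Function.Bijective e₂

/-!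
Write `μ : M × M' → R` and `ν : M' × M → S` for the pairings given by the two tensor
isomorphisms; since pure tensors span, `∑ μ(aᵢ, bᵢ) = 1` and `∑ ν(cⱼ, dⱼ) = 1` for finite
families. The pairings are associative only up to an `S`-linear `δ` with
`μ(x, n) m = δ(x ν(n, m))`, and that is enough: `x = ∑ δ(aᵢ) ν(bᵢ, x)` is a dual basis, the
`ν(cⱼ, -)` show that `M` is a generator, and `μ` inverts `R → End_S(M)`.

Conversely, for a progenerator `M` with `R ≅ End_S(M)`, the dual `M* = Hom_S(M, S)` with
`μ(m, f) = (x ↦ m f(x))` and evaluation form a Morita context whose pairings both reach `1`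
(dual basis, trace ideal). Such a pairing is a tensor product, a balanced `φ` factoring
through `b ↦ b • ∑ φ(cⱼ, dⱼ)`; hence `M ⊗_S M* ≅ R` and `M* ⊗_R M ≅ S`.
-/

attribute [instance] BimodTensorProduct.instAdd BimodTensorProduct.instL
  BimodTensorProduct.instR BimodTensorProduct.instComm
  InvertibleBimodule.addM' InvertibleBimodule.modLM'
  InvertibleBimodule.modRM' InvertibleBimodule.commM'

namespace IsBalancedBilinear

variable {A B C : Type} [Ring A] [Ring B] [Ring C]
  {M N L : Type} [AddCommGroup M] [Module A M] [Module Bᵐᵒᵖ M]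
  [AddCommGroup N] [Module B N] [Module Cᵐᵒᵖ N]
  [AddCommGroup L] [Module A L] [Module Cᵐᵒᵖ L] {f : M → N → L}

def addMonoidHomLeft (hf : IsBalancedBilinear A B C f) (n : N) : M →+ L :=
  AddMonoidHom.mk' (f · n) fun m m' => hf.add_left m m' n

lemma map_sum_right (hf : IsBalancedBilinear A B C f) (m : M) {ι : Type} (s : Finset ι)
    (g : ι → N) : f m (∑ i ∈ s, g i) = ∑ i ∈ s, f m (g i) :=
  map_sum (AddMonoidHom.mk' (f m) (hf.add_right m)) g s

def linearMapRight (hf : IsBalancedBilinear A B C f) (m : M) : N →ₗ[Cᵐᵒᵖ] L where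
  toFun := f m
  map_add' := hf.add_right m
  map_smul' c n := hf.map_smul_right c.unop m n

lemma comp_bimodHom (hf : IsBalancedBilinear A B C f) {L' : Type} [AddCommGroup L']
    [Module A L'] [Module Cᵐᵒᵖ L'] {α : L → L'} (hα : IsBimodHom A C α) :
    IsBalancedBilinear A B C (fun m n => α (f m n)) where
  add_left m m' n := by rw [hf.add_left, hα.1]
  add_right m n n' := by rw [hf.add_right, hα.1]
  balanced b m n := by rw [hf.balanced]
  map_smul_left a m n := by rw [hf.map_smul_left, hα.2.1]
  map_smul_right c m n := by rw [hf.map_smul_right, hα.2.2]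

end IsBalancedBilinear

namespace IsBimodHom

section

variable {A C : Type} [Ring A] [Ring C] {P L : Type}
  [AddCommGroup P] [Module A P] [Module Cᵐᵒᵖ P]
  [AddCommGroup L] [Module A L] [Module Cᵐᵒᵖ L]

lemma id : IsBimodHom A C (id : P → P) :=
  ⟨fun _ _ => rfl, fun _ _ => rfl, fun _ _ => rfl⟩

lemma symm_ofBijective {e : P → L} (he : IsBimodHom A C e) (hb : Function.Bijective e) :
    IsBimodHom A C (Equiv.ofBijective e hb).symm := by
  set E := Equiv.ofBijective e hb
  have hE : ∀ x, e (E.symm x) = x := E.apply_symm_apply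
  refine ⟨fun x y => E.injective ?_, fun a x => E.injective ?_, fun c x => E.injective ?_⟩
  · change e _ = e _
    rw [he.1, hE, hE, hE]
  · change e _ = e _
    rw [he.2.1, hE, hE]
  · change e _ = e _
    rw [he.2.2, hE, hE]

lemma comp {L' : Type} [AddCommGroup L'] [Module A L'] [Module Cᵐᵒᵖ L']
    {α : P → L} {β : L → L'} (hβ : IsBimodHom A C β) (hα : IsBimodHom A C α) :
    IsBimodHom A C (β ∘ α) :=
  ⟨fun x y => by simp only [Function.comp, hα.1, hβ.1],
    fun a x => by simp only [Function.comp, hα.2.1, hβ.2.1],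
    fun c x => by simp only [Function.comp, hα.2.2, hβ.2.2]⟩

lemma map_sum {α : P → L} (hα : IsBimodHom A C α) {ι : Type} (s : Finset ι) (g : ι → P) :
    α (∑ i ∈ s, g i) = ∑ i ∈ s, α (g i) :=
  _root_.map_sum (AddMonoidHom.mk' α hα.1) g s

end

section

variable {A L : Type} [Ring A] [AddCommGroup L] [Module A L] [Module Aᵐᵒᵖ L]

lemma apply_eq_smul_one {α : A → L} (hα : IsBimodHom A A α) (a : A) : α a = a • α 1 := by
  rw [← hα.2.1, smul_eq_mul, mul_one]

lemma apply_eq_op_smul_one {α : A → L} (hα : IsBimodHom A A α) (a : A) :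
    α a = op a • α 1 := by
  rw [← hα.2.2, op_smul_eq_mul, one_mul]

end

end IsBimodHom

namespace BimodTensorProduct

variable {A B C : Type} [Ring A] [Ring B] [Ring C]
  {M N : Type} [AddCommGroup M] [Module A M] [Module Bᵐᵒᵖ M] [SMulCommClass A Bᵐᵒᵖ M]
  [AddCommGroup N] [Module B N] [Module Cᵐᵒᵖ N] [SMulCommClass B Cᵐᵒᵖ N]
  (T : BimodTensorProduct A B C M N)

lemma exists_bimodHom_of_bijective {L₀ : Type} [AddCommGroup L₀] [Module A L₀]
    [Module Cᵐᵒᵖ L₀] {e : T.P → L₀} (he : IsBimodHom A C e) (hb : Function.Bijective e)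
    {L : Type} [AddCommGroup L] [Module A L] [Module Cᵐᵒᵖ L] [SMulCommClass A Cᵐᵒᵖ L]
    {φ : M → N → L} (hφ : IsBalancedBilinear A B C φ) :
    ∃ β : L₀ → L, IsBimodHom A C β ∧ ∀ m n, φ m n = β (e (T.τ m n)) := by
  obtain ⟨α, ⟨hα, hφα⟩, -⟩ := T.universal L φ hφ
  refine ⟨α ∘ (Equiv.ofBijective e hb).symm, hα.comp (he.symm_ofBijective hb),
    fun m n => ?_⟩
  rw [Function.comp_apply, ← Equiv.ofBijective_apply e hb, Equiv.symm_apply_apply, hφα]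

/-- The corestriction of `τ` to the span of the pure tensors factors `τ` a second time, so by
uniqueness in the universal property that span is everything. -/
lemma exists_sum_tau_eq (p : T.P) :
    ∃ (k : ℕ) (a : Fin k → M) (b : Fin k → N), ∑ i, T.τ (a i) (b i) = p := by
  set G := Submodule.span A (Set.range (Function.uncurry T.τ))
  have hτG : ∀ m n, T.τ m n ∈ G := fun m n => Submodule.subset_span ⟨(m, n), rfl⟩
  have hCG : ∀ (c : Cᵐᵒᵖ), ∀ x ∈ G, c • x ∈ G := by
    intro c x hx
    induction hx using Submodule.span_induction with
    | mem y hy =>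
      obtain ⟨⟨m, n⟩, rfl⟩ := hy
      exact (T.balanced_bilinear.map_smul_right c.unop m n) ▸ hτG m (c • n)
    | zero => rw [smul_zero]; exact G.zero_mem
    | add x y _ _ hx hy => rw [smul_add]; exact G.add_mem hx hy
    | smul a x _ hx => rw [← smul_comm a c x]; exact G.smul_mem a hx
  let _ : SMul Cᵐᵒᵖ G := ⟨fun c x => ⟨c • x, hCG c x x.2⟩⟩
  let _ : Module Cᵐᵒᵖ G :=
    Subtype.val_injective.module Cᵐᵒᵖ G.subtype.toAddMonoidHom fun _ _ => rfl
  have _ : SMulCommClass A Cᵐᵒᵖ G := ⟨fun a c x => Subtype.ext (smul_comm a c x.1)⟩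
  have hφ : IsBalancedBilinear A B C (fun m n => (⟨T.τ m n, hτG m n⟩ : G)) :=
    { add_left := fun m m' n => Subtype.ext (T.balanced_bilinear.add_left m m' n)
      add_right := fun m n n' => Subtype.ext (T.balanced_bilinear.add_right m n n')
      balanced := fun b m n => Subtype.ext (T.balanced_bilinear.balanced b m n)
      map_smul_left := fun a m n => Subtype.ext (T.balanced_bilinear.map_smul_left a m n)
      map_smul_right := fun c m n => Subtype.ext (T.balanced_bilinear.map_smul_right c m n) }
  obtain ⟨α, ⟨hα, hφα⟩, -⟩ := T.universal G _ hφ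
  have hval : Subtype.val ∘ α = id := (T.universal T.P T.τ T.balanced_bilinear).unique
    ⟨(IsBimodHom.comp ⟨fun _ _ => rfl, fun _ _ => rfl, fun _ _ => rfl⟩ hα),
      fun m n => congrArg Subtype.val (hφα m n)⟩
    ⟨IsBimodHom.id, fun _ _ => rfl⟩
  have hp : p ∈ G := by
    rw [show p = (α p).1 from (congrFun hval p).symm]
    exact (α p).2
  obtain ⟨k, r, g, hsum⟩ := Submodule.mem_span_set'.mp hp
  choose mn hmn using fun i => (g i).2
  refine ⟨k, fun i => r i • (mn i).1, fun i => (mn i).2, ?_⟩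
  rw [← hsum]
  refine Finset.sum_congr rfl fun i _ => ?_
  rw [T.balanced_bilinear.map_smul_left, ← hmn i]
  rfl

lemma exists_sum_map_tau_eq {L : Type} [AddCommGroup L] [Module A L] [Module Cᵐᵒᵖ L]
    {e : T.P → L} (he : IsBimodHom A C e) (hs : Function.Surjective e) (y : L) :
    ∃ (k : ℕ) (a : Fin k → M) (b : Fin k → N), ∑ i, e (T.τ (a i) (b i)) = y := by
  obtain ⟨p, rfl⟩ := hs y
  obtain ⟨k, a, b, rfl⟩ := T.exists_sum_tau_eq p
  exact ⟨k, a, b, (he.map_sum _ _).symm⟩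

end BimodTensorProduct

section RightModule

variable {S M : Type} [Ring S] [AddCommGroup M] [Module Sᵐᵒᵖ M]

variable (S) in
def opLinearEquivSelf : S ≃ₗ[Sᵐᵒᵖ] Sᵐᵒᵖ where
  toFun := op
  invFun := unop
  map_add' := op_add
  map_smul' _ _ := rfl
  left_inv _ := rfl
  right_inv _ := rfl

def LinearMap.opSmulRight {X : Type} [AddCommGroup X] [Module Sᵐᵒᵖ X]
    (g : M →ₗ[Sᵐᵒᵖ] S) (x : X) : M →ₗ[Sᵐᵒᵖ] X :=
  LinearMap.toSpanSingleton Sᵐᵒᵖ X x ∘ₗ (opLinearEquivSelf S).toLinearMap ∘ₗ g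

lemma LinearMap.opSmulRight_apply {X : Type} [AddCommGroup X] [Module Sᵐᵒᵖ X]
    (g : M →ₗ[Sᵐᵒᵖ] S) (x : X) (m : M) : g.opSmulRight x m = op (g m) • x :=
  rfl

theorem finite_and_projective_iff_exists_dual_basis :
    Module.Finite Sᵐᵒᵖ M ∧ Module.Projective Sᵐᵒᵖ M ↔
      ∃ (n : ℕ) (v : Fin n → M) (g : Fin n → M →ₗ[Sᵐᵒᵖ] S),
        ∀ x, ∑ i, op (g i x) • v i = x := by
  constructor
  · rintro ⟨_, _⟩
    obtain ⟨n, f, hf⟩ := Module.Finite.exists_fin' Sᵐᵒᵖ M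
    obtain ⟨σ, hσ⟩ := Module.projective_lifting_property f LinearMap.id hf
    refine ⟨n, fun i => f fun j => if i = j then 1 else 0,
      fun i => (opLinearEquivSelf S).symm.toLinearMap ∘ₗ LinearMap.proj i ∘ₗ σ,
      fun x => ?_⟩
    calc _ = f (σ x) := (LinearMap.pi_apply_eq_sum_univ f (σ x)).symm
      _ = x := LinearMap.congr_fun hσ x
  · rintro ⟨n, v, g, hvg⟩
    let s := Fintype.linearCombination Sᵐᵒᵖ v
    let i : M →ₗ[Sᵐᵒᵖ] (Fin n → Sᵐᵒᵖ) :=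
      LinearMap.pi fun j => (opLinearEquivSelf S).toLinearMap ∘ₗ g j
    have hsi : s ∘ₗ i = LinearMap.id := LinearMap.ext hvg
    exact ⟨Module.Finite.of_surjective s
      (Function.LeftInverse.surjective (LinearMap.congr_fun hsi)),
      Module.Projective.of_split i s hsi⟩

theorem isGenerator_iff_exists_sum_eq_one :
    IsGenerator S M ↔
      ∃ (n : ℕ) (c : Fin n → M →ₗ[Sᵐᵒᵖ] S) (d : Fin n → M),
        ∑ i, c i (d i) = 1 := by
  constructor
  · intro hgen
    set J := Submodule.span Sᵐᵒᵖ (Set.range fun p : (M →ₗ[Sᵐᵒᵖ] S) × M => p.1 p.2)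
    have hJ : J.mkQ = 0 := hgen S (S ⧸ J) J.mkQ 0 fun h => LinearMap.ext fun x =>
      (Submodule.Quotient.mk_eq_zero J).2 (Submodule.subset_span ⟨(h, x), rfl⟩)
    have h1 : (1 : S) ∈ J := (Submodule.Quotient.mk_eq_zero J).1 (LinearMap.congr_fun hJ 1)
    obtain ⟨n, r, g, hsum⟩ := Submodule.mem_span_set'.mp h1
    choose p hp using fun i => (g i).2
    refine ⟨n, fun i => (p i).1, fun i => r i • (p i).2, ?_⟩
    rw [← hsum]
    refine Finset.sum_congr rfl fun i _ => ?_
    rw [map_smul]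
    exact congrArg _ (hp i)
  · rintro ⟨n, c, d, hcd⟩ X Y _ _ _ _ f f' hff'
    ext y
    have hy : y = ∑ i, (c i).opSmulRight y (d i) := by
      calc y = op (∑ i, c i (d i)) • y := by rw [hcd, op_one, one_smul]
        _ = ∑ i, (c i).opSmulRight y (d i) := by rw [Finset.op_sum, Finset.sum_smul]; rfl
    rw [hy, map_sum, map_sum]
    exact Finset.sum_congr rfl fun i _ =>
      LinearMap.congr_fun (hff' ((c i).opSmulRight y)) (d i)

end RightModule

section LeftAction

variable {R S M : Type} [Ring R] [Ring S] [AddCommGroup M] [Module R M] [Module Sᵐᵒᵖ M]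
  {N : Type}

lemma leftActionHom_injective_of_sum_eq_one [SMulCommClass R Sᵐᵒᵖ M] [AddCommGroup N]
    [Module S N] [Module Rᵐᵒᵖ N] {μ : M → N → R} (hμ : IsBalancedBilinear R S R μ)
    {k : ℕ} (a : Fin k → M) (b : Fin k → N) (hab : ∑ i, μ (a i) (b i) = 1) :
    Function.Injective (leftActionHom R S M) := by
  rw [injective_iff_map_eq_zero]
  intro r hr
  calc r = ∑ i, μ (r • a i) (b i) := by
        simp_rw [hμ.map_smul_left, ← Finset.smul_sum, hab, smul_eq_mul, mul_one]
    _ = 0 := Finset.sum_eq_zero fun i _ => by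
        rw [show r • a i = 0 from LinearMap.congr_fun hr (a i)]
        exact (hμ.addMonoidHomLeft (b i)).map_zero

section

variable {μ : M → N → R} {ν : N → M →ₗ[Sᵐᵒᵖ] S} {δ : Module.End Sᵐᵒᵖ M}
  {k : ℕ} {a : Fin k → M} {b : Fin k → N}

lemma sum_op_smul_eq_self_of_pairing (hδ : ∀ x n m, μ x n • m = δ (op (ν n m) • x))
    (hab : ∑ i, μ (a i) (b i) = 1) (x : M) : ∑ i, op (ν (b i) x) • δ (a i) = x := by
  calc _ = ∑ i, δ (op (ν (b i) x) • a i) := by simp_rw [map_smul]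
    _ = ∑ i, μ (a i) (b i) • x := by simp_rw [hδ]
    _ = x := by rw [← Finset.sum_smul, hab, one_smul]

lemma leftActionHom_surjective_of_pairing [SMulCommClass R Sᵐᵒᵖ M]
    (hδ : ∀ x n m, μ x n • m = δ (op (ν n m) • x))
    (hab : ∑ i, μ (a i) (b i) = 1) : Function.Surjective (leftActionHom R S M) := by
  intro ψ
  let κ : Module.End Sᵐᵒᵖ M := ∑ i, (ν (b i)).opSmulRight (a i)
  have hδκ : ∀ y, δ (κ y) = y := fun y => by
    rw [LinearMap.sum_apply, map_sum]
    simp_rw [LinearMap.opSmulRight_apply, map_smul]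
    exact sum_op_smul_eq_self_of_pairing hδ hab y
  refine ⟨∑ i, μ (κ (ψ (δ (a i)))) (b i), LinearMap.ext fun y => ?_⟩
  calc (∑ i, μ (κ (ψ (δ (a i)))) (b i)) • y
      = ∑ i, δ (op (ν (b i) y) • κ (ψ (δ (a i)))) := by simp_rw [Finset.sum_smul, hδ]
    _ = δ (κ (ψ (∑ i, op (ν (b i) y) • δ (a i)))) := by simp only [map_sum, map_smul]
    _ = ψ y := by rw [sum_op_smul_eq_self_of_pairing hδ hab, hδκ]

end

end LeftAction

namespace InvertibleBimodule

variable {R S M : Type} [Ring R] [Ring S] [AddCommGroup M] [Module R M] [Module Sᵐᵒᵖ M]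
  [SMulCommClass R Sᵐᵒᵖ M] (I : InvertibleBimodule R S M)

def pairingLeft (m : M) (n : I.M') : R := I.e₁ (I.T₁.τ m n)

def pairingRight (n : I.M') (m : M) : S := I.e₂ (I.T₂.τ n m)

lemma pairingLeft_bilinear : IsBalancedBilinear R S R I.pairingLeft :=
  I.T₁.balanced_bilinear.comp_bimodHom I.e₁_iso.1

lemma pairingRight_bilinear : IsBalancedBilinear S R S I.pairingRight :=
  I.T₂.balanced_bilinear.comp_bimodHom I.e₂_iso.1

/-- `δ` is the image of `1` under `S ≅ M' ⊗[R] M → End_ℤ(M)`,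
`n ⊗ m ↦ (x ↦ pairingLeft x n • m)`. -/
lemma exists_end_pairing : ∃ δ : Module.End Sᵐᵒᵖ M,
    ∀ x n m, I.pairingLeft x n • m = δ (op (I.pairingRight n m) • x) := by
  let _ : Module S (M →+ M) :=
    Module.compHom (R := Sᵐᵒᵖᵈᵐᵃ) (M →+ M) (RingEquiv.opOp S).toRingHom
  have _ : SMulCommClass S Sᵐᵒᵖ (M →+ M) := ⟨fun _ _ _ => AddMonoidHom.ext fun _ => rfl⟩
  have hμ := I.pairingLeft_bilinear
  let F : I.M' → M → (M →+ M) := fun n m =>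
    ((smulAddHom R M).flip m).comp (hμ.addMonoidHomLeft n)
  have hF : IsBalancedBilinear S R S F :=
    { add_left := fun n n' m => AddMonoidHom.ext fun x => by
        change I.pairingLeft x (n + n') • m = I.pairingLeft x n • m + I.pairingLeft x n' • m
        rw [hμ.add_right, add_smul]
      add_right := fun n m m' => AddMonoidHom.ext fun x => smul_add _ m m'
      balanced := fun r n m => AddMonoidHom.ext fun x => by
        change I.pairingLeft x (op r • n) • m = I.pairingLeft x n • r • m
        rw [hμ.map_smul_right, op_smul_eq_mul, mul_smul]
      map_smul_left := fun s n m => AddMonoidHom.ext fun x => by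
        change I.pairingLeft x (s • n) • m = I.pairingLeft (op s • x) n • m
        rw [hμ.balanced]
      map_smul_right := fun s n m => AddMonoidHom.ext fun x => smul_comm _ (op s) m }
  obtain ⟨β, hβ, hFβ⟩ := I.T₂.exists_bimodHom_of_bijective I.e₂_iso.1 I.e₂_iso.2 hF
  refine ⟨{ toFun := β 1, map_add' := (β 1).map_add, map_smul' := fun s x => ?_ },
    fun x n m => ?_⟩
  · exact DFunLike.congr_fun
      ((hβ.apply_eq_smul_one s.unop).symm.trans (hβ.apply_eq_op_smul_one s.unop)) x
  · change F n m x = _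
    rw [hFβ, hβ.apply_eq_smul_one]
    rfl

theorem progenerator (I : InvertibleBimodule R S M) :
    Module.Finite Sᵐᵒᵖ M ∧ Module.Projective Sᵐᵒᵖ M ∧ IsGenerator S M ∧
      Function.Bijective (leftActionHom R S M) := by
  obtain ⟨k, a, b, hab⟩ := I.T₁.exists_sum_map_tau_eq I.e₁_iso.1 I.e₁_iso.2.2 1
  obtain ⟨l, c, d, hcd⟩ := I.T₂.exists_sum_map_tau_eq I.e₂_iso.1 I.e₂_iso.2.2 1
  obtain ⟨δ, hδ⟩ := I.exists_end_pairing
  have hν := I.pairingRight_bilinear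
  obtain ⟨hfin, hproj⟩ := finite_and_projective_iff_exists_dual_basis.mpr
    ⟨k, fun i => δ (a i), fun i => hν.linearMapRight (b i),
      sum_op_smul_eq_self_of_pairing (ν := hν.linearMapRight) hδ hab⟩
  exact ⟨hfin, hproj,
    isGenerator_iff_exists_sum_eq_one.mpr ⟨l, fun i => hν.linearMapRight (c i), d, hcd⟩,
    leftActionHom_injective_of_sum_eq_one I.pairingLeft_bilinear a b hab,
    leftActionHom_surjective_of_pairing (ν := hν.linearMapRight) hδ hab⟩

end InvertibleBimodule

structure MoritaContext (A B P Q : Type) [Ring A] [Ring B] [AddCommGroup P] [Module A P]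
    [Module Bᵐᵒᵖ P] [AddCommGroup Q] [Module B Q] [Module Aᵐᵒᵖ Q] where
  p : P → Q → A
  q : Q → P → B
  p_bilinear : IsBalancedBilinear A B A p
  q_bilinear : IsBalancedBilinear B A B q
  p_smul : ∀ x y x', p x y • x' = op (q y x') • x
  q_smul : ∀ y x y', q y x • y' = op (p x y') • y

namespace MoritaContext

variable {A B P Q : Type} [Ring A] [Ring B] [AddCommGroup P] [Module A P] [Module Bᵐᵒᵖ P]
  [AddCommGroup Q] [Module B Q] [Module Aᵐᵒᵖ Q] (K : MoritaContext A B P Q)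

def symm : MoritaContext B A Q P :=
  ⟨K.q, K.p, K.q_bilinear, K.p_bilinear, K.q_smul, K.p_smul⟩

section Universal

variable {L : Type} [AddCommGroup L] [Module B L] [Module Bᵐᵒᵖ L]
  {φ : Q → P → L} {k : ℕ} {c : Fin k → Q} {d : Fin k → P}

lemma eq_q_smul (hφ : IsBalancedBilinear B A B φ) (hcd : ∑ i, K.q (c i) (d i) = 1)
    (y : Q) (x : P) : φ y x = K.q y x • ∑ i, φ (c i) (d i) := by
  calc φ y x = φ y (op (∑ i, K.q (c i) (d i)) • x) := by rw [hcd, op_one, one_smul]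
    _ = ∑ i, φ y (K.p x (c i) • d i) := by
        rw [Finset.op_sum, Finset.sum_smul, hφ.map_sum_right]
        simp_rw [K.p_smul]
    _ = ∑ i, φ (K.q y x • c i) (d i) := by simp_rw [K.q_smul, hφ.balanced]
    _ = _ := by simp_rw [hφ.map_smul_left, Finset.smul_sum]

lemma op_smul_sum_eq_smul_sum (hφ : IsBalancedBilinear B A B φ)
    (hcd : ∑ i, K.q (c i) (d i) = 1) (b : B) :
    op b • ∑ i, φ (c i) (d i) = b • ∑ i, φ (c i) (d i) := by
  calc op b • ∑ i, φ (c i) (d i) = ∑ i, φ (c i) (op b • d i) := by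
        simp_rw [Finset.smul_sum, hφ.map_smul_right]
    _ = (∑ i, K.q (c i) (d i) * b) • ∑ i, φ (c i) (d i) := by
        rw [Finset.sum_smul]
        refine Finset.sum_congr rfl fun i _ => ?_
        rw [K.eq_q_smul hφ hcd, K.q_bilinear.map_smul_right, op_smul_eq_mul]
    _ = _ := by rw [← Finset.sum_mul, hcd, one_mul]

theorem universal_q [SMulCommClass B Bᵐᵒᵖ L] (hφ : IsBalancedBilinear B A B φ)
    (hcd : ∑ i, K.q (c i) (d i) = 1) :
    ∃! α : B → L, IsBimodHom B B α ∧ ∀ y x, φ y x = α (K.q y x) := by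
  refine ⟨fun b => b • ∑ i, φ (c i) (d i),
    ⟨⟨fun b b' => add_smul b b' _, fun b b' => mul_smul b b' _, fun b' b => ?_⟩,
      K.eq_q_smul hφ hcd⟩, ?_⟩
  · change (b * b'.unop) • _ = b' • b • _
    rw [mul_smul, ← K.op_smul_sum_eq_smul_sum hφ hcd, op_unop, smul_comm]
  · rintro α ⟨hα, hφα⟩
    funext b
    rw [hα.apply_eq_smul_one, ← hcd, hα.map_sum]
    simp_rw [← hφα]

def tensorProduct [SMulCommClass A Bᵐᵒᵖ P] [SMulCommClass B Aᵐᵒᵖ Q]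
    (hcd : ∑ i, K.q (c i) (d i) = 1) :
    BimodTensorProduct B A B Q P where
  P := B
  τ := K.q
  balanced_bilinear := K.q_bilinear
  universal _ _ _ _ _ _ hφ := K.universal_q hφ hcd

end Universal

end MoritaContext

section Dual

variable {R S M : Type} [Ring R] [Ring S] [AddCommGroup M] [Module R M] [Module Sᵐᵒᵖ M]
  [SMulCommClass R Sᵐᵒᵖ M]

instance : Module Rᵐᵒᵖ (M →ₗ[Sᵐᵒᵖ] S) :=
  haveI := SMulCommClass.symm R Sᵐᵒᵖ M
  inferInstanceAs (Module Rᵈᵐᵃ (M →ₗ[Sᵐᵒᵖ] S))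

lemma op_smul_dual_apply (r : R) (f : M →ₗ[Sᵐᵒᵖ] S) (x : M) :
    (op r • f) x = f (r • x) :=
  rfl

instance : SMulCommClass S Rᵐᵒᵖ (M →ₗ[Sᵐᵒᵖ] S) :=
  ⟨fun _ _ _ => LinearMap.ext fun _ => rfl⟩

lemma eq_of_forall_smul_eq (hΛ : Function.Bijective (leftActionHom R S M)) {r r' : R}
    (h : ∀ x : M, r • x = r' • x) : r = r' :=
  hΛ.1 (LinearMap.ext h)

section

variable (hΛ : Function.Bijective (leftActionHom R S M))

noncomputable def dualPairing (m : M) (f : M →ₗ[Sᵐᵒᵖ] S) : R :=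
  (Equiv.ofBijective _ hΛ).symm (f.opSmulRight m)

lemma dualPairing_smul (m : M) (f : M →ₗ[Sᵐᵒᵖ] S) (x : M) :
    dualPairing hΛ m f • x = op (f x) • m :=
  LinearMap.congr_fun ((Equiv.ofBijective _ hΛ).apply_symm_apply (f.opSmulRight m)) x

noncomputable def moritaContextDual : MoritaContext R S M (M →ₗ[Sᵐᵒᵖ] S) where
  p := dualPairing hΛ
  q f m := f m
  p_bilinear :=
    { add_left := fun m m' f => eq_of_forall_smul_eq hΛ fun x => by
        rw [add_smul]
        simp only [dualPairing_smul, smul_add]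
      add_right := fun m f g => eq_of_forall_smul_eq hΛ fun x => by
        rw [add_smul]
        simp only [dualPairing_smul, LinearMap.add_apply, op_add, add_smul]
      balanced := fun s m f => eq_of_forall_smul_eq hΛ fun x => by
        simp only [dualPairing_smul, LinearMap.smul_apply, smul_eq_mul, op_mul, mul_smul]
      map_smul_left := fun r m f => eq_of_forall_smul_eq hΛ fun x => by
        rw [smul_eq_mul, mul_smul]
        simp only [dualPairing_smul, smul_comm r]
      map_smul_right := fun r m f => eq_of_forall_smul_eq hΛ fun x => by
        rw [op_smul_eq_mul, mul_smul]
        simp only [dualPairing_smul, op_smul_dual_apply] }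
  q_bilinear :=
    { add_left := fun _ _ _ => rfl
      add_right := fun f => f.map_add
      balanced := fun _ _ _ => rfl
      map_smul_left := fun _ _ _ => rfl
      map_smul_right := fun s f => f.map_smul (op s) }
  p_smul := dualPairing_smul hΛ
  q_smul f x f' := LinearMap.ext fun y => by
    rw [op_smul_dual_apply, dualPairing_smul, map_smul, op_smul_eq_mul]
    rfl

end

theorem nonempty_invertibleBimodule_of_progenerator
    (hΛ : Function.Bijective (leftActionHom R S M))
    (hM : Module.Finite Sᵐᵒᵖ M ∧ Module.Projective Sᵐᵒᵖ M) (hgen : IsGenerator S M) :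
    Nonempty (InvertibleBimodule R S M) := by
  obtain ⟨n, v, g, hvg⟩ := finite_and_projective_iff_exists_dual_basis.mp hM
  obtain ⟨k, c, d, hcd⟩ := isGenerator_iff_exists_sum_eq_one.mp hgen
  let K := moritaContextDual hΛ
  have hvg' : ∑ i, K.symm.q (v i) (g i) = 1 := eq_of_forall_smul_eq hΛ fun x => by
    change (∑ i, dualPairing hΛ (v i) (g i)) • x = (1 : R) • x
    simp_rw [Finset.sum_smul, dualPairing_smul, one_smul]
    exact hvg x
  exact ⟨{ M' := M →ₗ[Sᵐᵒᵖ] S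
           T₁ := K.symm.tensorProduct hvg'
           T₂ := K.tensorProduct hcd
           e₁ := id
           e₁_iso := ⟨IsBimodHom.id, Function.bijective_id⟩
           e₂ := id
           e₂_iso := ⟨IsBimodHom.id, Function.bijective_id⟩ }⟩

end Dual

/-- An `R`-`S` bimodule `M` is invertible if and only if `M`
is a progenerator as a right `S`-module and the left action map
`R → End_S(M)` is a ring isomorphism. -/
theorem invertible_iff_progenerator (R S M : Type) [Ring R] [Ring S]
    [AddCommGroup M] [Module R M] [Module Sᵐᵒᵖ M] [SMulCommClass R Sᵐᵒᵖ M] :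
    Nonempty (InvertibleBimodule R S M) ↔
      (Module.Finite Sᵐᵒᵖ M ∧ Module.Projective Sᵐᵒᵖ M ∧ IsGenerator S M ∧
        Function.Bijective (leftActionHom R S M)) := by
  refine ⟨fun ⟨I⟩ => I.progenerator, fun ⟨hfin, hproj, hgen, hΛ⟩ => ?_⟩
  exact nonempty_invertibleBimodule_of_progenerator hΛ ⟨hfin, hproj⟩ hgen
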